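/- arXiv:cond-mat/9808036 — 3 statements merged into one kernel-verified Lean document; each statement's English description precedes it below -/
import Mathlib

section
/- If 0 < b < 27/4 and Ψ : [0,∞) → (0,∞) satisfies -ln(Ψ(s)/Ψ(0)) = ∫₀^s dx/(x + b(1 - x^{1/3})), then Ψ(s) ~ C/s as s → ∞ for some constant C > 0; in particular ∫₀^∞ Ψ(s) ds = ∞. -/
/-!
Writing `D(x) = x + b(1 - x^{1/3})`, which is positive on `[0, ∞)` exactly because `b < 27/4`,
the difference `1/D(x) - 1/(x + b) = b x^{1/3} / (D(x)(x + b))` is `O(x^{-5/3})`, hence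
integrable on `(0, ∞)`. So `-log (Ψ s / Ψ 0) = log ((s + b)/b) + G(s)` with `G(s)` converging to
a finite `L`, i.e. `Ψ s = Ψ 0 · b/(s + b) · exp (-G(s))`, and `s Ψ s → Ψ 0 · b · exp (-L) > 0`.
A function with `s f(s) → C ≠ 0` is comparable to `1/s` at infinity, hence not integrable.
-/

open Set Filter Topology MeasureTheory intervalIntegral Real Asymptotics

lemma integral_one_div_add_const {b s : ℝ} (hb : 0 < b) (hsb : 0 < s + b) :
    ∫ x in (0:ℝ)..s, 1 / (x + b) = log ((s + b) / b) := by
  rw [intervalIntegral.integral_comp_add_right (fun x => 1 / x), zero_add,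
    integral_one_div_of_pos hb hsb]

lemma integral_eq_log_add_integral_sub {F : ℝ → ℝ} {b s : ℝ} (hb : 0 < b) (hs : 0 ≤ s)
    (hF : IntegrableOn (fun x => F x - 1 / (x + b)) (Ioi 0)) :
    ∫ x in (0:ℝ)..s, F x = log ((s + b) / b) + ∫ x in (0:ℝ)..s, (F x - 1 / (x + b)) := by
  have hinv : IntervalIntegrable (fun x => 1 / (x + b)) volume 0 s := by
    refine (continuousOn_const.div (by fun_prop) fun x hx => ?_).intervalIntegrable
    rw [uIcc_of_le hs] at hx
    linarith [hx.1]
  have hsub : IntervalIntegrable (fun x => F x - 1 / (x + b)) volume 0 s :=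
    (intervalIntegrable_iff_integrableOn_Ioc_of_le hs).2 (hF.mono_set Ioc_subset_Ioi_self)
  rw [← integral_one_div_add_const hb (by linarith), ← integral_add hinv hsub]
  simp

lemma eq_mul_exp_neg_integral_of_neg_log_div_eq {Ψ F : ℝ → ℝ} {b s : ℝ} (hb : 0 < b)
    (hs : 0 ≤ s) (hΨs : 0 < Ψ s) (hΨ0 : 0 < Ψ 0)
    (hF : IntegrableOn (fun x => F x - 1 / (x + b)) (Ioi 0))
    (h : -log (Ψ s / Ψ 0) = ∫ x in (0:ℝ)..s, F x) :
    Ψ s = Ψ 0 * (b / (s + b)) * exp (-∫ x in (0:ℝ)..s, (F x - 1 / (x + b))) := by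
  have hlog : log (Ψ s / Ψ 0) = log (b / (s + b)) - ∫ x in (0:ℝ)..s, (F x - 1 / (x + b)) := by
    rw [← inv_div (s + b), log_inv]
    linarith [integral_eq_log_add_integral_sub hb hs hF]
  have hratio : Ψ s / Ψ 0 = b / (s + b) * exp (-∫ x in (0:ℝ)..s, (F x - 1 / (x + b))) := by
    rw [← exp_log (div_pos hΨs hΨ0), hlog, sub_eq_add_neg, exp_add, exp_log (by positivity)]
  rw [div_eq_iff hΨ0.ne'] at hratio
  rw [hratio]
  ring

lemma tendsto_mul_self_of_eq_mul_exp_neg_integral {Ψ g : ℝ → ℝ} {b c : ℝ}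
    (hg : IntegrableOn g (Ioi 0))
    (hΨ : ∀ᶠ s in atTop, Ψ s = c * (b / (s + b)) * exp (-∫ x in (0:ℝ)..s, g x)) :
    Tendsto (fun s => Ψ s * s) atTop (𝓝 (c * b * exp (-∫ x in Ioi 0, g x))) := by
  have hexp : Tendsto (fun s => exp (-∫ x in (0:ℝ)..s, g x)) atTop
      (𝓝 (exp (-∫ x in Ioi 0, g x))) :=
    (continuous_exp.tendsto _).comp (intervalIntegral_tendsto_integral_Ioi 0 hg tendsto_id).neg
  have hfrac : Tendsto (fun s => b * s / (s + b)) atTop (𝓝 b) := by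
    have h := tendsto_const_nhds (x := b).sub
      (tendsto_const_nhds (x := b ^ 2).div_atTop (tendsto_atTop_add_const_right _ b tendsto_id))
    rw [sub_zero] at h
    refine h.congr' ?_
    filter_upwards [eventually_gt_atTop (-b)] with s hs
    have : s + b ≠ 0 := by linarith
    simp only [id]
    field_simp
    ring
  refine ((hfrac.const_mul c).mul hexp).congr' ?_
  filter_upwards [hΨ] with s hs
  rw [hs]
  ring

lemma not_integrableOn_Ioi_of_tendsto_mul_self {f : ℝ → ℝ} {a C : ℝ} (hC : C ≠ 0)
    (hf : Tendsto (fun s => f s * s) atTop (𝓝 C)) : ¬ IntegrableOn f (Ioi a) := by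
  intro hint
  have hinv : (fun s : ℝ => s⁻¹) =O[atTop] f := by
    have := (isBigO_refl f atTop).mul ((hf.inv₀ hC).isBigO_one ℝ)
    refine this.congr' ?_ (by simp)
    filter_upwards [hf.eventually_ne hC] with s hs
    have hs' : s ≠ 0 := by rintro rfl; simp at hs
    have hfs : f s ≠ 0 := by rintro h; simp [h] at hs
    field_simp
  have hrpow : IntegrableAtFilter (fun s : ℝ => s ^ (-1 : ℝ)) atTop := by
    simpa only [rpow_neg_one] using hinv.integrableAtFilter
      measurable_inv.aestronglyMeasurable.stronglyMeasurableAtFilter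
      ⟨Ioi a, Ioi_mem_atTop a, hint⟩
  exact lt_irrefl _ (integrableAtFilter_rpow_atTop_iff.1 hrpow)

namespace SelfSimilarProfile

noncomputable def denom (b x : ℝ) : ℝ := x + b * (1 - x ^ ((1:ℝ) / 3))

/-- `b = 27/4` is exactly where this cubic acquires the double root `t = 3/2`:
`4 (t^3 - 27/4 (t - 1)) = (2t - 3)^2 (t + 3)`. -/
lemma cubic_pos {b t : ℝ} (hb0 : 0 < b) (hb : b < 27 / 4) (ht : 0 ≤ t) :
    0 < t ^ 3 + b * (1 - t) := by
  rcases le_or_gt t 1 with h | h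
  · rcases ht.eq_or_lt with rfl | ht
    · simpa using hb0
    · nlinarith [pow_pos ht 3, mul_nonneg hb0.le (sub_nonneg.2 h)]
  · nlinarith [mul_nonneg (sq_nonneg (2 * t - 3)) (by linarith : (0:ℝ) ≤ t + 3),
      mul_pos (sub_pos.2 h) (by linarith : (0:ℝ) < 27 / 4 - b)]

lemma denom_pos {b x : ℝ} (hb0 : 0 < b) (hb : b < 27 / 4) (hx : 0 ≤ x) : 0 < denom b x := by
  have hcube : (x ^ ((1:ℝ) / 3)) ^ 3 = x := by
    simpa using rpow_inv_natCast_pow (n := 3) hx (by norm_num)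
  simpa only [denom, hcube] using cubic_pos hb0 hb (rpow_nonneg hx ((1:ℝ) / 3))

lemma continuous_denom (b : ℝ) : Continuous (denom b) := by
  unfold denom
  have : Continuous fun x : ℝ => x ^ ((1:ℝ) / 3) :=
    continuous_id.rpow_const fun _ => Or.inr (by norm_num)
  fun_prop

lemma isLittleO_rpow_one_third_id : (fun x : ℝ => x ^ ((1:ℝ) / 3)) =o[atTop] id := by
  rw [isLittleO_iff_tendsto (g := id) fun x (hx : x = 0) => by simp [hx]]
  refine (tendsto_rpow_neg_atTop (y := 2 / 3) (by norm_num)).congr' ?_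
  filter_upwards [eventually_gt_atTop 0] with x hx
  rw [id, ← rpow_sub_one hx.ne']
  norm_num

lemma denom_isEquivalent_id (b : ℝ) : denom b ~[atTop] id := by
  refine IsLittleO.isEquivalent ?_
  have : (fun x : ℝ => b * (1 - x ^ ((1:ℝ) / 3))) =o[atTop] id :=
    ((isLittleO_const_id_atTop 1).sub isLittleO_rpow_one_third_id).const_mul_left b
  exact this.congr_left fun x => by simp [denom]

lemma isBigO_inv_denom_sub_inv_add (b : ℝ) :
    (fun x => 1 / denom b x - 1 / (x + b)) =O[atTop] fun x => x ^ (-(5:ℝ) / 3) := by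
  have hadd : (fun x : ℝ => x + b) ~[atTop] id :=
    ((isLittleO_const_id_atTop b).congr_left fun x => by simp).isEquivalent
  have hquot := (IsEquivalent.refl (u := fun x : ℝ => b * x ^ ((1:ℝ) / 3))).div
    ((denom_isEquivalent_id b).mul hadd)
  refine (hquot.isBigO.congr' ?_ ?_).trans
    (isBigO_const_mul_self b (fun x => x ^ (-(5:ℝ) / 3)) atTop)
  · have hdenom := (denom_isEquivalent_id b).symm.tendsto_atTop tendsto_id
    filter_upwards [hdenom.eventually_gt_atTop 0, eventually_gt_atTop (-b)] with x hD hx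
    have hxb : x + b ≠ 0 := by linarith
    simp only [Pi.div_apply, Pi.mul_apply]
    field_simp
    simp only [denom]
    ring
  · filter_upwards [eventually_gt_atTop 0] with x hx
    simp only [Pi.div_apply, Pi.mul_apply, id]
    rw [mul_div_assoc, ← sq, ← rpow_natCast, ← rpow_sub hx]
    norm_num

lemma integrableOn_inv_denom_sub_inv_add {b : ℝ} (hb0 : 0 < b) (hb : b < 27 / 4) :
    IntegrableOn (fun x => 1 / denom b x - 1 / (x + b)) (Ioi 0) := by
  have hcont : ContinuousOn (fun x => 1 / denom b x - 1 / (x + b)) (Ici 0) := by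
    refine (continuousOn_const.div (continuous_denom b).continuousOn
      fun x hx => (denom_pos hb0 hb hx).ne').sub (continuousOn_const.div (by fun_prop) ?_)
    intro x (hx : 0 ≤ x)
    positivity
  refine (hcont.locallyIntegrableOn measurableSet_Ici |>.integrableOn_of_isBigO_atTop
    (isBigO_inv_denom_sub_inv_add b) ?_).mono_set Ioi_subset_Ici_self
  exact integrableAtFilter_rpow_atTop_iff.2 (by norm_num)

end SelfSimilarProfile

open SelfSimilarProfile

theorem selfsimilar_profile_infinite_volume
    (b : ℝ) (hb0 : 0 < b) (hb : b < 27/4)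
    (Ψ : ℝ → ℝ) (hΨ_pos : ∀ s, 0 ≤ s → 0 < Ψ s)
    (hΨ : ∀ s, 0 ≤ s →
      -Real.log (Ψ s / Ψ 0) =
        ∫ x in (0:ℝ)..s, 1 / (x + b * (1 - x ^ ((1:ℝ)/3)))) :
    (∃ C : ℝ, 0 < C ∧ Tendsto (fun s => Ψ s * s) atTop (𝓝 C)) ∧
    ¬ IntegrableOn Ψ (Set.Ioi 0) := by
  have hΨ0 := hΨ_pos 0 le_rfl
  have hg := integrableOn_inv_denom_sub_inv_add hb0 hb
  have hlim := tendsto_mul_self_of_eq_mul_exp_neg_integral hg <|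
    (eventually_ge_atTop 0).mono fun s hs =>
      eq_mul_exp_neg_integral_of_neg_log_div_eq hb0 hs (hΨ_pos s hs) hΨ0 hg (hΨ s hs)
  have hC : 0 < Ψ 0 * b * exp (-∫ x in Ioi 0, (1 / denom b x - 1 / (x + b))) := by positivity
  exact ⟨⟨_, hC, hlim⟩, not_integrableOn_Ioi_of_tendsto_mul_self hC.ne' hlim⟩
end

section
/- If b ≥ 27/4, then the integral ∫₀^s dx/(x + b(1 - x^{1/3})) diverges to +∞ as s increases to s₀, where s₀ is the smallest positive zero of x + b(1 - x^{1/3}); moreover 1 ≤ s₀ ≤ 27/8, and s₀ decreases to 1 as b → ∞. -/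
open Set Filter Topology MeasureTheory intervalIntegral Real

/-!
Write `F b x = x + b (1 - x^{1/3})`. Since `F b 0 = b > 0` and `F b x > 0` for `0 < x ≤ 1`,
the smallest positive zero `s₀` exceeds `1`; since `F b (27/8) = 27/8 - b/2 ≤ 0`, the
intermediate value theorem puts it below `27/8`. For `1 ≤ v = x^{1/3} ≤ u = s₀^{1/3}` we have
`u³ - v³ ≥ 3 (u - v)`, hence `F b x = F b x - F b s₀ ≤ (b/3)(s₀ - x)` on `[1, s₀]`, and the
integral of `1 / F b` dominates `(3/b) (log (s₀ - 1) - log (s₀ - s))`. For `t ≥ 1` the value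
`F b t` decreases in `b` and tends to `-∞` when `t > 1`, which gives monotonicity of `s₀` and
`s₀ → 1`.
-/

def posZeros (f : ℝ → ℝ) : Set ℝ := {x | 0 < x ∧ f x = 0}

theorem le_of_isLeast_posZeros {f : ℝ → ℝ} {s a c : ℝ} (hs : IsLeast (posZeros f) s)
    (hf : ContinuousOn f (Icc a c)) (ha : 0 ≤ a) (hac : a ≤ c) (hfa : 0 < f a) (hfc : f c ≤ 0) :
    s ≤ c := by
  obtain ⟨z, hz, hfz⟩ := intermediate_value_Icc' hac hf ⟨hfc, hfa.le⟩
  have hza : a < z := hz.1.lt_of_ne fun h => hfa.ne' (h ▸ hfz)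
  exact (hs.2 ⟨ha.trans_lt hza, hfz⟩).trans hz.2

theorem pos_of_lt_of_isLeast_posZeros {f : ℝ → ℝ} {s x : ℝ} (hs : IsLeast (posZeros f) s)
    (hf : ContinuousOn f (Icc 0 x)) (hf0 : 0 < f 0) (hx0 : 0 ≤ x) (hxs : x < s) : 0 < f x := by
  by_contra! hfx
  exact (le_of_isLeast_posZeros hs hf le_rfl hx0 hf0 hfx).not_gt hxs

theorem three_mul_sub_le_pow_three_sub {u v : ℝ} (hv : 1 ≤ v) (hvu : v ≤ u) :
    3 * (u - v) ≤ u ^ 3 - v ^ 3 := by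
  nlinarith [mul_nonneg (sub_nonneg.2 hvu) (by nlinarith : (0:ℝ) ≤ u ^ 2 + u * v + v ^ 2 - 3)]

theorem rpow_one_div_three_pow_three {x : ℝ} (hx : 0 ≤ x) : (x ^ ((1:ℝ)/3)) ^ 3 = x := by
  rw [one_div]; exact_mod_cast rpow_inv_natCast_pow hx three_ne_zero

theorem tendsto_log_const_sub_nhdsLT (c : ℝ) :
    Tendsto (fun s => log (c - s)) (𝓝[<] c) atBot := by
  have h : Tendsto (fun s => c - s) (𝓝[<] c) (𝓝[>] (c - c)) :=
    (continuous_const.sub continuous_id).continuousWithinAt.tendsto_nhdsWithin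
      fun s (hs : s < c) => sub_lt_sub_left hs c
  rw [sub_self] at h
  exact tendsto_log_nhdsGT_zero.comp h

theorem integral_inv_const_sub {b c s : ℝ} (hbc : b < c) (hsc : s < c) :
    ∫ x in b..s, (c - x)⁻¹ = log (c - b) - log (c - s) := by
  rw [integral_comp_sub_left (fun x => x⁻¹), integral_inv_of_pos (sub_pos.2 hsc) (sub_pos.2 hbc),
    log_div (sub_pos.2 hbc).ne' (sub_pos.2 hsc).ne']

theorem tendsto_integral_one_div_atTop_of_le_mul_sub {f : ℝ → ℝ} {a b c K : ℝ}
    (hab : a ≤ b) (hbc : b < c) (hK : 0 < K)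
    (hf : ContinuousOn f (Ico a c)) (hpos : ∀ x ∈ Ico a c, 0 < f x)
    (hle : ∀ x ∈ Ico b c, f x ≤ K * (c - x)) :
    Tendsto (fun s => ∫ x in a..s, 1 / f x) (𝓝[<] c) atTop := by
  have hint : ∀ t u, a ≤ t → t ≤ u → u < c → IntervalIntegrable (fun x => 1 / f x) volume t u := by
    intro t u hat htu huc
    have hsub : uIcc t u ⊆ Ico a c := by
      rw [uIcc_of_le htu]; exact Icc_subset_Ico (by linarith) huc
    exact (continuousOn_const.div (hf.mono hsub) fun x hx =>
      (hpos x (hsub hx)).ne').intervalIntegrable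
  set C := ∫ x in a..b, 1 / f x
  have hlower : ∀ s ∈ Ioo b c,
      C + K⁻¹ * (log (c - b) - log (c - s)) ≤ ∫ x in a..s, 1 / f x := by
    rintro s ⟨hbs, hsc⟩
    rw [← integral_add_adjacent_intervals (hint a b le_rfl hab hbc) (hint b s hab hbs.le hsc),
      ← integral_inv_const_sub hbc hsc, ← intervalIntegral.integral_const_mul]
    gcongr
    refine integral_mono_on hbs.le ?_ (hint b s hab hbs.le hsc) fun x hx => ?_
    · refine (ContinuousOn.intervalIntegrable ?_).const_mul _
      refine (continuousOn_const.sub continuousOn_id).inv₀ fun x hx => ?_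
      rw [uIcc_of_le hbs.le] at hx
      exact (sub_pos.2 (hx.2.trans_lt hsc)).ne'
    · have hx' : x ∈ Ico b c := ⟨hx.1, hx.2.trans_lt hsc⟩
      rw [← mul_inv, ← one_div]
      exact one_div_le_one_div_of_le (hpos x ⟨hab.trans hx'.1, hx'.2⟩) (hle x hx')
  have hbound : Tendsto (fun s => C + K⁻¹ * (log (c - b) - log (c - s))) (𝓝[<] c) atTop := by
    refine tendsto_atTop_add_const_left _ C (Tendsto.const_mul_atTop (inv_pos.2 hK) ?_)
    simp only [sub_eq_add_neg]
    exact tendsto_atTop_add_const_left _ _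
      (tendsto_neg_atBot_atTop.comp (tendsto_log_const_sub_nhdsLT c))
  exact tendsto_atTop_mono' _ (eventually_of_mem (Ioo_mem_nhdsLT hbc) hlower) hbound

noncomputable def F (b x : ℝ) : ℝ := x + b * (1 - x ^ ((1:ℝ)/3))

theorem continuous_F (b : ℝ) : Continuous (F b) :=
  continuous_id.add <|
    continuous_const.mul (continuous_const.sub (continuous_rpow_const (by norm_num)))

theorem F_zero (b : ℝ) : F b 0 = b := by simp [F]

theorem F_one (b : ℝ) : F b 1 = 1 := by simp [F]

theorem F_twentySevenEighths (b : ℝ) : F b (27/8) = 27/8 - b/2 := by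
  have h : (27/8 : ℝ) ^ ((1:ℝ)/3) = 3/2 := by
    rw [show (27/8 : ℝ) = (3/2) ^ 3 by norm_num, one_div]
    exact_mod_cast pow_rpow_inv_natCast (by norm_num) three_ne_zero
  rw [F, h]; ring

theorem F_pos_of_le_one {b x : ℝ} (hb : 0 ≤ b) (hx : 0 < x) (hx1 : x ≤ 1) : 0 < F b x := by
  have h : x ^ ((1:ℝ)/3) ≤ 1 := rpow_le_one hx.le hx1 (by norm_num)
  have := mul_nonneg hb (sub_nonneg.2 h)
  unfold F; linarith

theorem one_lt_of_F_eq_zero {b x : ℝ} (hb : 0 ≤ b) (hx : 0 < x) (h : F b x = 0) : 1 < x := by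
  by_contra! hx1
  exact (F_pos_of_le_one hb hx hx1).ne' h

theorem F_le_mul_sub {b s x : ℝ} (hb : 0 ≤ b) (hs : F b s = 0) (hx1 : 1 ≤ x) (hxs : x ≤ s) :
    F b x ≤ b / 3 * (s - x) := by
  have hv : 1 ≤ x ^ ((1:ℝ)/3) := one_le_rpow hx1 (by norm_num)
  have hvu : x ^ ((1:ℝ)/3) ≤ s ^ ((1:ℝ)/3) := rpow_le_rpow (by linarith) hxs (by norm_num)
  have hcube := three_mul_sub_le_pow_three_sub hv hvu
  rw [rpow_one_div_three_pow_three (by linarith), rpow_one_div_three_pow_three (by linarith)]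
    at hcube
  unfold F at hs ⊢
  nlinarith

theorem le_of_isLeast_posZeros_F {b s t : ℝ} (hs : IsLeast (posZeros (F b)) s) (ht : 1 ≤ t)
    (hFt : F b t ≤ 0) : s ≤ t :=
  le_of_isLeast_posZeros hs (continuous_F b).continuousOn zero_le_one ht
    (by rw [F_one]; exact one_pos) hFt

theorem le_twentySevenEighths_of_isLeast_posZeros_F {b s : ℝ} (hb : 27/4 ≤ b)
    (hs : IsLeast (posZeros (F b)) s) : s ≤ 27/8 :=
  le_of_isLeast_posZeros_F hs (by norm_num) (by rw [F_twentySevenEighths]; linarith)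

theorem le_of_isLeast_posZeros_F_of_le {a b sa sb : ℝ} (ha : 0 ≤ a) (hab : a ≤ b)
    (hsa : IsLeast (posZeros (F a)) sa) (hsb : IsLeast (posZeros (F b)) sb) : sb ≤ sa := by
  have h1 : 1 < sa := one_lt_of_F_eq_zero ha hsa.1.1 hsa.1.2
  have hv : 1 ≤ sa ^ ((1:ℝ)/3) := one_le_rpow h1.le (by norm_num)
  refine le_of_isLeast_posZeros_F hsb h1.le ?_
  have := hsa.1.2
  unfold F at this ⊢
  nlinarith

theorem eventually_F_nonpos {t : ℝ} (ht : 1 < t) : ∀ᶠ b in atTop, F b t ≤ 0 := by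
  have hv : 1 < t ^ ((1:ℝ)/3) := one_lt_rpow ht (by norm_num)
  have h : Tendsto (fun b => F b t) atTop atBot :=
    tendsto_atBot_add_const_left _ t ((tendsto_mul_const_atBot_of_neg (by linarith)).2 tendsto_id)
  exact h.eventually (eventually_le_atBot 0)

theorem tendsto_integral_one_div_F {b s : ℝ} (hb : 0 < b) (hs : IsLeast (posZeros (F b)) s) :
    Tendsto (fun t => ∫ x in (0:ℝ)..t, 1 / F b x) (𝓝[<] s) atTop :=
  tendsto_integral_one_div_atTop_of_le_mul_sub zero_le_one (one_lt_of_F_eq_zero hb.le hs.1.1 hs.1.2)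
    (div_pos hb three_pos) (continuous_F b).continuousOn
    (fun _ hx => pos_of_lt_of_isLeast_posZeros hs (continuous_F b).continuousOn
      (by rwa [F_zero]) hx.1 hx.2)
    (fun _ hx => F_le_mul_sub hb.le hs.1.2 hx.1 hx.2.le)

theorem divergence_at_smallest_zero
    (s0 : ℝ → ℝ)
    (hs0 : ∀ b : ℝ, 27/4 ≤ b →
      0 < s0 b ∧ (s0 b + b * (1 - (s0 b) ^ ((1:ℝ)/3)) = 0) ∧
      (∀ x : ℝ, 0 < x → x + b * (1 - x ^ ((1:ℝ)/3)) = 0 → s0 b ≤ x)) :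
    (∀ b : ℝ, 27/4 ≤ b →
      Tendsto (fun s => ∫ x in (0:ℝ)..s, 1 / (x + b * (1 - x ^ ((1:ℝ)/3))))
        (𝓝[<] (s0 b)) atTop) ∧
    (∀ b : ℝ, 27/4 ≤ b → 1 ≤ s0 b ∧ s0 b ≤ 27/8) ∧
    AntitoneOn s0 (Set.Ici (27/4)) ∧
    Tendsto s0 atTop (𝓝 1) := by
  have hleast : ∀ b, 27/4 ≤ b → IsLeast (posZeros (F b)) (s0 b) := fun b hb =>
    ⟨⟨(hs0 b hb).1, (hs0 b hb).2.1⟩, fun x hx => (hs0 b hb).2.2 x hx.1 hx.2⟩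
  have hone : ∀ b, 27/4 ≤ b → 1 < s0 b := fun b hb =>
    one_lt_of_F_eq_zero (by linarith) (hleast b hb).1.1 (hleast b hb).1.2
  refine ⟨fun b hb => tendsto_integral_one_div_F (by linarith) (hleast b hb),
    fun b hb => ⟨(hone b hb).le, le_twentySevenEighths_of_isLeast_posZeros_F hb (hleast b hb)⟩,
    fun a ha b hb hab => le_of_isLeast_posZeros_F_of_le (by linarith [mem_Ici.1 ha]) hab
      (hleast a ha) (hleast b hb), tendsto_order.2 ⟨fun l hl => ?_, fun u hu => ?_⟩⟩
  · filter_upwards [eventually_ge_atTop (27/4)] with b hb using hl.trans (hone b hb)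
  · obtain ⟨t, ht1, htu⟩ := exists_between hu
    filter_upwards [eventually_ge_atTop (27/4), eventually_F_nonpos ht1] with b hb hFt
    exact (le_of_isLeast_posZeros_F (hleast b hb) ht1.le hFt).trans_lt htu
end

section
/- Every completely monotone function on (0,∞) (i.e., smooth g with (-1)^k g^{(k)} ≥ 0 for all k ≥ 0) extends to an analytic function on the open right half of the complex plane. -/
open Set Complex

open Filter

noncomputable def cmD (f : ℝ → ℝ) (k : ℕ) (x : ℝ) : ℝ := iteratedDerivWithin k f (Set.Ioi 0) x

lemma cm_diffOn {f : ℝ → ℝ} (hf : ContDiffOn ℝ (⊤ : ℕ∞) f (Set.Ioi 0)) (k : ℕ) :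
    DifferentiableOn ℝ (cmD f k) (Set.Ioi 0) :=
  hf.differentiableOn_iteratedDerivWithin (by exact_mod_cast ENat.natCast_lt_top k) (uniqueDiffOn_Ioi 0)

lemma cm_contOn {f : ℝ → ℝ} (hf : ContDiffOn ℝ (⊤ : ℕ∞) f (Set.Ioi 0)) (k : ℕ) :
    ContinuousOn (cmD f k) (Set.Ioi 0) := (cm_diffOn hf k).continuousOn

lemma cm_diffAt {f : ℝ → ℝ} (hf : ContDiffOn ℝ (⊤ : ℕ∞) f (Set.Ioi 0)) (k : ℕ) {x : ℝ} (hx : 0 < x) :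
    DifferentiableAt ℝ (cmD f k) x :=
  (cm_diffOn hf k).differentiableAt (Ioi_mem_nhds hx)

lemma cm_deriv {f : ℝ → ℝ} (hf : ContDiffOn ℝ (⊤ : ℕ∞) f (Set.Ioi 0)) (k : ℕ) {x : ℝ} (hx : 0 < x) :
    deriv (cmD f k) x = cmD f (k+1) x := by
  rw [cmD, iteratedDerivWithin_succ,
    derivWithin_of_isOpen isOpen_Ioi hx]
  rfl

lemma cm_hasDeriv {f : ℝ → ℝ} (hf : ContDiffOn ℝ (⊤ : ℕ∞) f (Set.Ioi 0)) (k : ℕ) {x : ℝ} (hx : 0 < x) :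
    HasDerivAt (cmD f k) (cmD f (k+1) x) x := by
  rw [← cm_deriv hf k hx]; exact (cm_diffAt hf k hx).hasDerivAt

/-- `(-1)^k f^{(k)}` is antitone on `(0,∞)`. -/
lemma cm_antitone {f : ℝ → ℝ} (hf : ContDiffOn ℝ (⊤ : ℕ∞) f (Set.Ioi 0))
    (hcm : ∀ (k : ℕ) (x : ℝ), 0 < x → 0 ≤ (-1) ^ k * cmD f k x) (k : ℕ) :
    AntitoneOn (fun x => (-1) ^ k * cmD f k x) (Set.Ioi 0) := by
  apply antitoneOn_of_deriv_nonpos (convex_Ioi 0)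
  · exact (cm_contOn hf k).const_smul ((-1:ℝ)^k)
  · rw [interior_Ioi]
    exact fun x hx => ((cm_diffAt hf k hx).const_mul _).differentiableWithinAt
  · intro x hx
    rw [interior_Ioi] at hx
    rw [deriv_const_mul _ (cm_diffAt hf k hx), cm_deriv hf k hx]
    have h := hcm (k+1) x hx
    have : (-1:ℝ)^(k+1) * cmD f (k+1) x = -((-1)^k * cmD f (k+1) x) := by ring
    nlinarith [h]

noncomputable def cmH (f : ℝ → ℝ) : ℝ → ℝ := -(derivWithin f (Set.Ioi 0))

lemma cmH_smooth {f : ℝ → ℝ} (hf : ContDiffOn ℝ (⊤ : ℕ∞) f (Set.Ioi 0)) :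
    ContDiffOn ℝ (⊤ : ℕ∞) (cmH f) (Set.Ioi 0) :=
  (hf.derivWithin (uniqueDiffOn_Ioi 0) (by simp)).neg

lemma cmH_iter {f : ℝ → ℝ} (k : ℕ) {x : ℝ} (hx : 0 < x) :
    cmD (cmH f) k x = -(cmD f (k+1) x) := by
  have h1 := iteratedDerivWithin_neg (s := Set.Ioi 0) (n := k) (x := x)
    (f := derivWithin f (Set.Ioi 0))
  rw [cmD, cmH, h1, ← iteratedDerivWithin_succ']
  rfl

lemma cmH_cm {f : ℝ → ℝ}
    (hcm : ∀ (k : ℕ) (x : ℝ), 0 < x → 0 ≤ (-1) ^ k * cmD f k x) :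
    ∀ (k : ℕ) (x : ℝ), 0 < x → 0 ≤ (-1) ^ k * cmD (cmH f) k x := by
  intro k x hx
  rw [cmH_iter k hx]
  have h := hcm (k+1) x hx
  rw [pow_succ] at h
  nlinarith [h]

noncomputable def cmQ (f : ℝ → ℝ) (n : ℕ) (a s : ℝ) : ℝ :=
  f s - ∑ k ∈ Finset.range n, cmD f k a * (s - a) ^ k / (Nat.factorial k)

lemma cmQ_deriv_eq {f : ℝ → ℝ} (n : ℕ) {a x : ℝ} (ha : 0 < a) (hx : 0 < x) :
    cmD f 1 x - ∑ k ∈ Finset.range (n+1),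
        cmD f k a * ((k:ℝ) * (x - a) ^ (k-1) * 1) / (Nat.factorial k)
      = -(cmQ (cmH f) n a x) := by
  rw [cmQ, Finset.sum_range_succ']
  have hx1 : cmH f x = -(cmD f 1 x) := by
    rw [cmH, cmD, iteratedDerivWithin_one]; rfl
  have hterm : ∀ j ∈ Finset.range n,
      cmD f (j+1) a * (((j+1:ℕ):ℝ) * (x - a) ^ (j+1-1) * 1) / (Nat.factorial (j+1))
        = -(cmD (cmH f) j a * (x - a) ^ j / (Nat.factorial j)) := by
    intro j _
    rw [cmH_iter j ha, Nat.factorial_succ]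
    have hj : (j + 1 : ℕ) - 1 = j := rfl
    rw [hj]
    push_cast
    have h1 : ((j:ℝ)+1) ≠ 0 := by positivity
    have h2 : ((Nat.factorial j : ℝ)) ≠ 0 := by positivity
    field_simp
  rw [Finset.sum_congr rfl hterm]
  simp [hx1, Finset.sum_neg_distrib]
  ring

lemma cmQ_hasDeriv {f : ℝ → ℝ} (hf : ContDiffOn ℝ (⊤ : ℕ∞) f (Set.Ioi 0)) (n : ℕ) {a x : ℝ}
    (ha : 0 < a) (hx : 0 < x) :
    HasDerivAt (cmQ f (n+1) a) (-(cmQ (cmH f) n a x)) x := by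
  have hfd : HasDerivAt f (cmD f 1 x) x := by
    have h := cm_hasDeriv hf 0 hx
    simp only [cmD, iteratedDerivWithin_zero] at h
    exact h
  have hsum : HasDerivAt
      (fun s => ∑ k ∈ Finset.range (n+1), cmD f k a * (s - a) ^ k / (Nat.factorial k))
      (∑ k ∈ Finset.range (n+1),
        cmD f k a * ((k:ℝ) * (x - a) ^ (k-1) * 1) / (Nat.factorial k)) x := by
    apply HasDerivAt.fun_sum
    intro k _
    exact ((((hasDerivAt_id x).sub_const a).pow k).const_mul (cmD f k a)).div_const _
  have := hfd.sub hsum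
  rw [cmQ_deriv_eq n ha hx] at this
  exact this

lemma cm_le_of_deriv_nonpos {F G : ℝ → ℝ} {s a : ℝ} (hs : 0 < s) (hsa : s < a)
    (hF : ∀ x ∈ Set.Ioi (0:ℝ), HasDerivAt F (G x) x)
    (hG : ∀ x ∈ Set.Ioo s a, G x ≤ 0) : F a ≤ F s := by
  have hanti : AntitoneOn F (Set.Icc s a) := by
    apply antitoneOn_of_deriv_nonpos (convex_Icc s a)
    · intro x hx
      exact (hF x (lt_of_lt_of_le hs hx.1)).continuousAt.continuousWithinAt
    · intro x hx
      rw [interior_Icc] at hx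
      exact (hF x (hs.trans hx.1)).differentiableAt.differentiableWithinAt
    · intro x hx
      rw [interior_Icc] at hx
      rw [(hF x (hs.trans hx.1)).deriv]
      exact hG x hx
  exact hanti (Set.left_mem_Icc.2 hsa.le) (Set.right_mem_Icc.2 hsa.le) hsa.le

lemma cmQ_at_a {f : ℝ → ℝ} (n : ℕ) {a : ℝ} (ha : 0 < a) : cmQ f (n+1) a a = 0 := by
  rw [cmQ]
  rw [Finset.sum_eq_single_of_mem 0 (Finset.mem_range.2 (Nat.succ_pos n))]
  · simp [cmD, iteratedDerivWithin_zero]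
  · intro k _ hk
    simp [zero_pow hk]

lemma cmQ_bounds : ∀ (n : ℕ) (f : ℝ → ℝ), ContDiffOn ℝ (⊤ : ℕ∞) f (Set.Ioi 0) →
    (∀ (k : ℕ) (x : ℝ), 0 < x → 0 ≤ (-1) ^ k * cmD f k x) →
    ∀ {a s : ℝ}, 0 < s → s < a →
    0 ≤ cmQ f n a s ∧
      cmQ f n a s ≤ (-1) ^ n * cmD f n s * (a - s) ^ n / (Nat.factorial n) := by
  intro n
  induction n with
  | zero =>
    intro f hf hcm a s hs hsa
    have h0 : cmQ f 0 a s = f s := by simp [cmQ]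
    have h1 : (-1:ℝ)^0 * cmD f 0 s * (a-s)^0 / (Nat.factorial 0) = f s := by
      simp [cmD, iteratedDerivWithin_zero]
    have h2 := hcm 0 s hs
    simp only [pow_zero, one_mul, cmD, iteratedDerivWithin_zero] at h2
    rw [h0, h1]
    exact ⟨h2, le_refl _⟩
  | succ n ih =>
    intro f hf hcm a s hs hsa
    have ha : 0 < a := hs.trans hsa
    have ihh : ∀ x : ℝ, 0 < x → x < a → 0 ≤ cmQ (cmH f) n a x ∧
        cmQ (cmH f) n a x ≤ (-1) ^ n * cmD (cmH f) n x * (a - x) ^ n / (Nat.factorial n) :=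
      fun x hx0 hxa => ih (cmH f) (cmH_smooth hf) (cmH_cm hcm) hx0 hxa
    have hfa : cmQ f (n+1) a a = 0 := cmQ_at_a n ha
    constructor
    · -- lower bound
      have hle : cmQ f (n+1) a a ≤ cmQ f (n+1) a s := by
        apply cm_le_of_deriv_nonpos (F := cmQ f (n+1) a) (G := fun x => -(cmQ (cmH f) n a x)) hs hsa
        · exact fun x hx => cmQ_hasDeriv hf n ha hx
        · exact fun x hx => neg_nonpos.2 (ihh x (hs.trans hx.1) hx.2).1
      rw [hfa] at hle
      exact hle
    · -- upper bound
      set C : ℝ := (-1)^(n+1) * cmD f (n+1) s with hC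
      set Psi : ℝ → ℝ := fun u => C * (a - u)^(n+1) / (Nat.factorial (n+1)) - cmQ f (n+1) a u
        with hPsi
      have hPsiDeriv : ∀ x ∈ Set.Ioi (0:ℝ), HasDerivAt Psi
          (C * (((n:ℝ)+1) * (a - x)^n * (-1)) / (Nat.factorial (n+1)) + cmQ (cmH f) n a x) x := by
        intro x hx
        have h1 : HasDerivAt (fun u : ℝ => C * (a - u)^(n+1) / (Nat.factorial (n+1)))
            (C * (((n:ℝ)+1) * (a - x)^n * (-1)) / (Nat.factorial (n+1))) x := by
          have hb : HasDerivAt (fun u : ℝ => a - u) (-1) x := (hasDerivAt_id x).const_sub a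
          have hp := hb.fun_pow (n+1)
          simp only [Nat.add_sub_cancel] at hp
          have := (hp.const_mul C).div_const ((Nat.factorial (n+1)) : ℝ)
          refine this.congr_deriv ?_
          push_cast
          ring
        have h2 := (h1.fun_sub (cmQ_hasDeriv hf n ha hx))
        refine h2.congr_deriv ?_
        ring
      have hkey : Psi a ≤ Psi s := by
        apply cm_le_of_deriv_nonpos hs hsa hPsiDeriv
        intro x hx
        have hx0 : 0 < x := hs.trans hx.1
        have hup := (ihh x hx0 hx.2).2
        have hmono := cm_antitone hf hcm (n+1) (Set.mem_Ioi.2 hs) (Set.mem_Ioi.2 hx0) hx.1.le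
        -- hmono : (-1)^(n+1) * cmD f (n+1) x ≤ (-1)^(n+1) * cmD f (n+1) s = C
        have hiter : cmD (cmH f) n x = -(cmD f (n+1) x) := cmH_iter n hx0
        have hfac : (0:ℝ) < (Nat.factorial n : ℝ) := by positivity
        have hax : (0:ℝ) ≤ a - x := by linarith [hx.2]
        have hpow : (0:ℝ) ≤ (a - x)^n := pow_nonneg hax n
        have e1 : (-1:ℝ)^n * cmD (cmH f) n x = (-1)^(n+1) * cmD f (n+1) x := by
          rw [hiter, pow_succ]; ring
        have hup2 : cmQ (cmH f) n a x ≤ C * (a-x)^n / (Nat.factorial n) := by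
          refine hup.trans ?_
          rw [e1]
          have h4 := mul_le_mul_of_nonneg_right hmono hpow
          exact (div_le_div_iff_of_pos_right hfac).2 h4
        have efac : ((Nat.factorial (n+1) : ℝ)) = ((n:ℝ)+1) * (Nat.factorial n) := by
          rw [Nat.factorial_succ]; push_cast; ring
        have e2 : C * (((n:ℝ)+1) * (a-x)^n * (-1)) / (Nat.factorial (n+1))
            = -(C * (a-x)^n / (Nat.factorial n)) := by
          rw [efac]
          field_simp
        rw [e2]
        linarith [hup2]
      have hPsia : Psi a = 0 := by
        simp only [hPsi, sub_self, zero_pow (Nat.succ_ne_zero n), mul_zero, zero_div, hfa]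
      rw [hPsia] at hkey
      simp only [hPsi] at hkey
      -- hkey : 0 ≤ C * (a - s)^(n+1) / (n+1)! - cmQ f (n+1) a s
      rw [hC] at hkey
      linarith [hkey]

lemma cm_term_le {f : ℝ → ℝ} (hf : ContDiffOn ℝ (⊤ : ℕ∞) f (Set.Ioi 0))
    (hcm : ∀ (k : ℕ) (x : ℝ), 0 < x → 0 ≤ (-1) ^ k * cmD f k x) (k : ℕ) {a s : ℝ}
    (hs : 0 < s) (hsa : s < a) :
    (-1) ^ k * cmD f k a * (a - s) ^ k / (Nat.factorial k) ≤ f s := by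
  have h1 := (cmQ_bounds (k+1) f hf hcm hs hsa).1
  rw [cmQ] at h1
  have hterm : ∀ j ∈ Finset.range (k+1),
      0 ≤ cmD f j a * (s - a) ^ j / (Nat.factorial j) := by
    intro j _
    have h2 := hcm j a (hs.trans hsa)
    have e : cmD f j a * (s - a) ^ j = ((-1)^j * cmD f j a) * (a - s) ^ j := by
      rw [show s - a = -(a - s) by ring, neg_pow (a - s) j]; ring
    have h3 : (0:ℝ) ≤ cmD f j a * (s - a) ^ j := by
      rw [e]; exact mul_nonneg h2 (pow_nonneg (by linarith) j)
    exact div_nonneg h3 (by positivity)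
  have hle := Finset.single_le_sum hterm (Finset.mem_range.2 (Nat.lt_succ_self k))
  have e : (-1:ℝ)^k * cmD f k a * (a - s) ^ k / (Nat.factorial k)
      = cmD f k a * (s - a) ^ k / (Nat.factorial k) := by
    rw [show s - a = -(a - s) by ring, neg_pow (a - s) k]; ring
  rw [e]
  linarith

lemma cm_tendsto {f : ℝ → ℝ} (hf : ContDiffOn ℝ (⊤ : ℕ∞) f (Set.Ioi 0))
    (hcm : ∀ (k : ℕ) (x : ℝ), 0 < x → 0 ≤ (-1) ^ k * cmD f k x) {a t : ℝ}
    (ht0 : a / 2 < t) (hta : t < a) (ha : 0 < a) :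
    Filter.Tendsto (fun n => ∑ k ∈ Finset.range n,
      cmD f k a * (t - a) ^ k / (Nat.factorial k)) Filter.atTop (nhds (f t)) := by
  obtain ⟨s, hsdef⟩ : ∃ s : ℝ, s = t - a / 2 := ⟨_, rfl⟩
  have hs : 0 < s := by rw [hsdef]; linarith
  have hst : s < t := by rw [hsdef]; linarith
  have ht : 0 < t := by linarith
  obtain ⟨q, hq⟩ : ∃ q : ℝ, q = (a - t) / (t - s) := ⟨_, rfl⟩
  have hts : t - s = a / 2 := by rw [hsdef]; ring
  have hq0 : 0 ≤ q := by
    rw [hq]; apply div_nonneg <;> linarith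
  have hq1 : q < 1 := by
    rw [hq, div_lt_one (by linarith)]
    linarith
  have hbound : ∀ n : ℕ, cmQ f n a t ≤ f s * q ^ n := by
    intro n
    have h1 := (cmQ_bounds n f hf hcm ht hta).2
    have h2 := cm_term_le hf hcm n hs hst
    -- h2 : (-1)^n * cmD f n t * (t-s)^n / n! ≤ f s
    have hfac : (0:ℝ) < (Nat.factorial n : ℝ) := by positivity
    have e : (-1:ℝ)^n * cmD f n t * (a - t)^n / (Nat.factorial n)
        = ((-1)^n * cmD f n t * (t - s)^n / (Nat.factorial n)) * q ^ n := by
      rw [hq, div_pow]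
      have hts0 : (0:ℝ) < (t - s)^n := pow_pos (by linarith) n
      field_simp
    have hnn : (0:ℝ) ≤ (-1)^n * cmD f n t * (t - s)^n / (Nat.factorial n) := by
      apply div_nonneg _ hfac.le
      exact mul_nonneg (hcm n t ht) (pow_nonneg (by linarith) n)
    have hqn : (0:ℝ) ≤ q ^ n := pow_nonneg hq0 n
    calc cmQ f n a t ≤ (-1)^n * cmD f n t * (a - t)^n / (Nat.factorial n) := h1
      _ = ((-1)^n * cmD f n t * (t - s)^n / (Nat.factorial n)) * q ^ n := e
      _ ≤ f s * q ^ n := mul_le_mul_of_nonneg_right h2 hqn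
  have hlow : ∀ n : ℕ, 0 ≤ cmQ f n a t := fun n => (cmQ_bounds n f hf hcm ht hta).1
  have htend0 : Filter.Tendsto (fun n : ℕ => cmQ f n a t) Filter.atTop (nhds 0) := by
    apply squeeze_zero hlow hbound
    have := (tendsto_pow_atTop_nhds_zero_of_lt_one hq0 hq1).const_mul (f s)
    simpa using this
  have : Filter.Tendsto (fun n : ℕ => f t - cmQ f n a t) Filter.atTop (nhds (f t - 0)) :=
    tendsto_const_nhds.sub htend0
  simp only [sub_zero] at this
  convert this using 2 with n
  rw [cmQ]
  ring

noncomputable def cmP (f : ℝ → ℝ) (a : ℝ) : FormalMultilinearSeries ℂ ℂ ℂ :=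
  fun k => ContinuousMultilinearMap.mkPiRing ℂ (Fin k)
    (((cmD f k a / (Nat.factorial k) : ℝ) : ℂ))

lemma cmP_apply (f : ℝ → ℝ) (a : ℝ) (k : ℕ) (y : ℂ) :
    (cmP f a k) (fun _ => y) = ((cmD f k a / (Nat.factorial k) : ℝ) : ℂ) * y ^ k := by
  simp [cmP, ContinuousMultilinearMap.mkPiRing_apply, smul_eq_mul]
  ring

lemma cmP_norm (f : ℝ → ℝ) (a : ℝ) (k : ℕ) :
    ‖cmP f a k‖ = |cmD f k a| / (Nat.factorial k) := by
  rw [cmP, ContinuousMultilinearMap.norm_mkPiRing, Complex.norm_real, Real.norm_eq_abs,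
    abs_div, Nat.abs_cast]

lemma cm_abs_eq {f : ℝ → ℝ}
    (hcm : ∀ (k : ℕ) (x : ℝ), 0 < x → 0 ≤ (-1) ^ k * cmD f k x) (k : ℕ) {a : ℝ}
    (ha : 0 < a) : |cmD f k a| = (-1) ^ k * cmD f k a := by
  rw [← _root_.abs_of_nonneg (hcm k a ha), abs_mul, _root_.abs_pow, abs_neg, _root_.abs_one, one_pow, one_mul]

lemma cmP_radius {f : ℝ → ℝ} (hf : ContDiffOn ℝ (⊤ : ℕ∞) f (Set.Ioi 0))
    (hcm : ∀ (k : ℕ) (x : ℝ), 0 < x → 0 ≤ (-1) ^ k * cmD f k x) {a : ℝ} (ha : 0 < a) :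
    ENNReal.ofReal a ≤ (cmP f a).radius := by
  apply ENNReal.le_of_forall_nnreal_lt
  intro r hr
  have hra : (r : ℝ) < a := by
    rw [← ENNReal.ofReal_coe_nnreal] at hr
    exact (ENNReal.ofReal_lt_ofReal_iff ha).1 hr
  have hr0 : (0:ℝ) ≤ (r : ℝ) := r.coe_nonneg
  set s : ℝ := (a - r) / 2 with hsdef
  have hs : 0 < s := by rw [hsdef]; linarith
  have hsa : s < a := by rw [hsdef]; linarith
  have hras : (r : ℝ) ≤ a - s := by rw [hsdef]; linarith
  apply FormalMultilinearSeries.le_radius_of_bound _ (f s)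
  intro n
  rw [cmP_norm, cm_abs_eq hcm n ha]
  have h1 : (-1:ℝ)^n * cmD f n a / (Nat.factorial n) * (r:ℝ)^n
      ≤ (-1)^n * cmD f n a / (Nat.factorial n) * (a - s)^n := by
    apply mul_le_mul_of_nonneg_left (pow_le_pow_left₀ hr0 hras n)
    exact div_nonneg (hcm n a ha) (by positivity)
  refine h1.trans ?_
  have h3 := cm_term_le hf hcm n hs hsa
  have e : (-1:ℝ)^n * cmD f n a / (Nat.factorial n) * (a-s)^n
      = (-1)^n * cmD f n a * (a-s)^n / (Nat.factorial n) := by ring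
  linarith [h3, e.le, e.ge]

lemma cm_memBall {a : ℝ} (ha : 0 < a) {z : ℂ} (hz : ‖z - (a:ℂ)‖ < a) :
    z - (a:ℂ) ∈ Metric.eball (0:ℂ) (ENNReal.ofReal a) := by
  rw [Metric.mem_eball, edist_zero_right, ← ofReal_norm]
  exact (ENNReal.ofReal_lt_ofReal_iff ha).2 hz

lemma cmT_analyticAt {f : ℝ → ℝ} (hf : ContDiffOn ℝ (⊤ : ℕ∞) f (Set.Ioi 0))
    (hcm : ∀ (k : ℕ) (x : ℝ), 0 < x → 0 ≤ (-1) ^ k * cmD f k x) {a : ℝ} (ha : 0 < a)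
    {z : ℂ} (hz : ‖z - (a:ℂ)‖ < a) :
    AnalyticAt ℂ (fun w => (cmP f a).sum (w - (a:ℂ))) z := by
  have hrad : (0:ENNReal) < (cmP f a).radius :=
    lt_of_lt_of_le (by simp [ENNReal.ofReal_pos, ha]) (cmP_radius hf hcm ha)
  have hball := (cmP f a).hasFPowerSeriesOnBall hrad
  have hmem : z - (a:ℂ) ∈ EMetric.ball (0:ℂ) (cmP f a).radius :=
    EMetric.ball_subset_ball (cmP_radius hf hcm ha) (cm_memBall ha hz)
  have h1 : AnalyticAt ℂ (cmP f a).sum (z - (a:ℂ)) := hball.analyticAt_of_mem hmem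
  have h2 : AnalyticAt ℂ (fun w : ℂ => w - (a:ℂ)) z := by
    exact (analyticAt_id).sub analyticAt_const
  exact AnalyticAt.comp (g := (cmP f a).sum) (f := fun w : ℂ => w - (a:ℂ)) h1 h2

lemma cmT_real {f : ℝ → ℝ} (hf : ContDiffOn ℝ (⊤ : ℕ∞) f (Set.Ioi 0))
    (hcm : ∀ (k : ℕ) (x : ℝ), 0 < x → 0 ≤ (-1) ^ k * cmD f k x) {a t : ℝ}
    (ht0 : a / 2 < t) (hta : t < a) (ha : 0 < a) :
    (cmP f a).sum ((t:ℂ) - (a:ℂ)) = ((f t : ℝ) : ℂ) := by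
  have ht : 0 < t := by linarith
  have hnorm : ‖(t:ℂ) - (a:ℂ)‖ < a := by
    rw [← Complex.ofReal_sub, Complex.norm_real, Real.norm_eq_abs]
    rw [_root_.abs_of_nonpos (by linarith : t - a ≤ 0)]
    linarith
  have hmem : (t:ℂ) - (a:ℂ) ∈ EMetric.ball (0:ℂ) (cmP f a).radius :=
    EMetric.ball_subset_ball (cmP_radius hf hcm ha) (cm_memBall ha hnorm)
  have hhs := (cmP f a).hasSum hmem
  have htends := hhs.tendsto_sum_nat
  have heq : ∀ n : ℕ, ∑ k ∈ Finset.range n, (cmP f a k) (fun _ => (t:ℂ) - (a:ℂ))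
      = (((∑ k ∈ Finset.range n, cmD f k a * (t - a)^k / (Nat.factorial k) : ℝ)) : ℂ) := by
    intro n
    rw [Complex.ofReal_sum]
    apply Finset.sum_congr rfl
    intro k _
    rw [cmP_apply, ← Complex.ofReal_sub]
    push_cast
    ring
  have htends2 : Filter.Tendsto (fun n => ∑ k ∈ Finset.range n,
      (cmP f a k) (fun _ => (t:ℂ) - (a:ℂ))) Filter.atTop (nhds ((f t : ℝ) : ℂ)) := by
    simp only [heq]
    exact (Complex.continuous_ofReal.tendsto _).comp (cm_tendsto hf hcm ht0 hta ha)
  exact tendsto_nhds_unique htends htends2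

lemma cm_real_mem_ball {c t : ℝ} (ht0 : 0 < t) (htc : t < c) :
    (t:ℂ) ∈ Metric.ball (c:ℂ) c := by
  rw [Metric.mem_ball, dist_eq_norm, ← Complex.ofReal_sub, Complex.norm_real,
    Real.norm_eq_abs, _root_.abs_of_nonpos (by linarith : t - c ≤ 0)]
  linarith

lemma cm_consistent {f : ℝ → ℝ} (hf : ContDiffOn ℝ (⊤ : ℕ∞) f (Set.Ioi 0))
    (hcm : ∀ (k : ℕ) (x : ℝ), 0 < x → 0 ≤ (-1) ^ k * cmD f k x) {a b : ℝ}
    (ha : 0 < a) (hb : 0 < b) (hab1 : a / 2 < b) (hab2 : b < 2 * a)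
    {z : ℂ} (hza : ‖z - (a:ℂ)‖ < a) (hzb : ‖z - (b:ℂ)‖ < b) :
    (cmP f a).sum (z - (a:ℂ)) = (cmP f b).sum (z - (b:ℂ)) := by
  obtain ⟨U, hU⟩ : ∃ U : Set ℂ, U = Metric.ball (a:ℂ) a ∩ Metric.ball (b:ℂ) b := ⟨_, rfl⟩
  have hUconv : Convex ℝ U := by rw [hU]; exact (convex_ball _ _).inter (convex_ball _ _)
  have hApre : IsPreconnected U := hUconv.isPreconnected
  have hAa : AnalyticOnNhd ℂ (fun w => (cmP f a).sum (w - (a:ℂ))) U := by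
    intro w hw
    apply cmT_analyticAt hf hcm ha
    have h := (hU ▸ hw).1
    rwa [Metric.mem_ball, dist_eq_norm] at h
  have hAb : AnalyticOnNhd ℂ (fun w => (cmP f b).sum (w - (b:ℂ))) U := by
    intro w hw
    apply cmT_analyticAt hf hcm hb
    have h := (hU ▸ hw).2
    rwa [Metric.mem_ball, dist_eq_norm] at h
  obtain ⟨m, hm⟩ : ∃ m : ℝ, m = max a b := ⟨_, rfl⟩
  obtain ⟨l, hl⟩ : ∃ l : ℝ, l = min a b := ⟨_, rfl⟩
  have hma : a ≤ m := hm ▸ le_max_left a b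
  have hmb : b ≤ m := hm ▸ le_max_right a b
  have hla : l ≤ a := hl ▸ min_le_left a b
  have hlb : l ≤ b := hl ▸ min_le_right a b
  have hml : m / 2 < l := by
    rcases le_total a b with h | h
    · rw [hm, hl, max_eq_right h, min_eq_left h]; linarith
    · rw [hm, hl, max_eq_left h, min_eq_right h]; linarith
  have hm0 : 0 < m := lt_of_lt_of_le ha hma
  obtain ⟨t₀, ht₀⟩ : ∃ t₀ : ℝ, t₀ = (m / 2 + l) / 2 := ⟨_, rfl⟩
  have ht₀1 : m / 2 < t₀ := by rw [ht₀]; linarith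
  have ht₀2 : t₀ < l := by rw [ht₀]; linarith
  have ht₀0 : 0 < t₀ := by linarith
  have hreal : ∀ t : ℝ, m / 2 < t → t < l →
      (cmP f a).sum ((t:ℂ) - (a:ℂ)) = (cmP f b).sum ((t:ℂ) - (b:ℂ)) := by
    intro t h1 h2
    rw [cmT_real hf hcm (by linarith : a / 2 < t) (by linarith : t < a) ha,
      cmT_real hf hcm (by linarith : b / 2 < t) (by linarith : t < b) hb]
  obtain ⟨δ, hδ⟩ : ∃ δ : ℝ, δ = (l - t₀) / 2 := ⟨_, rfl⟩
  have hδ0 : 0 < δ := by rw [hδ]; linarith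
  obtain ⟨u, hu⟩ : ∃ u : ℕ → ℝ, u = fun n : ℕ => t₀ + δ / ((n:ℝ) + 1) := ⟨_, rfl⟩
  have hun : ∀ n : ℕ, m / 2 < u n ∧ u n < l ∧ u n ≠ t₀ := by
    intro n
    have hn1 : (1:ℝ) ≤ (n:ℝ) + 1 := by
      have : (0:ℝ) ≤ (n:ℝ) := Nat.cast_nonneg n
      linarith
    have hn0 : (0:ℝ) < (n:ℝ) + 1 := by linarith
    have hdiv0 : 0 < δ / ((n:ℝ) + 1) := div_pos hδ0 hn0
    have hdivle : δ / ((n:ℝ) + 1) ≤ δ := by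
      rw [div_le_iff₀ hn0]
      nlinarith
    rw [hu]
    refine ⟨by linarith, by rw [hδ] at hdivle ⊢; linarith, by intro h; linarith⟩
  have hut : Filter.Tendsto u Filter.atTop (nhds t₀) := by
    rw [hu]
    have h1 : Filter.Tendsto (fun n : ℕ => (n:ℝ) + 1) Filter.atTop Filter.atTop :=
      Filter.tendsto_atTop_add_const_right _ 1 tendsto_natCast_atTop_atTop
    have h2 : Filter.Tendsto (fun n : ℕ => δ / ((n:ℝ) + 1)) Filter.atTop (nhds 0) :=
      Filter.Tendsto.div_atTop tendsto_const_nhds h1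
    have h3 := (tendsto_const_nhds (x := t₀)).add h2
    simpa using h3
  have hutC : Filter.Tendsto (fun n => ((u n : ℝ) : ℂ)) Filter.atTop
      (nhdsWithin (t₀:ℂ) {(t₀:ℂ)}ᶜ) := by
    apply tendsto_nhdsWithin_of_tendsto_nhds_of_eventually_within
    · exact (Complex.continuous_ofReal.tendsto _).comp hut
    · apply Filter.Eventually.of_forall
      intro n
      simp only [Set.mem_compl_iff, Set.mem_singleton_iff]
      intro hcontra
      exact (hun n).2.2 (Complex.ofReal_inj.1 hcontra)
  have hfreq : ∃ᶠ w in nhdsWithin (t₀:ℂ) {(t₀:ℂ)}ᶜ,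
      (cmP f a).sum (w - (a:ℂ)) = (cmP f b).sum (w - (b:ℂ)) := by
    apply hutC.frequently
    apply Filter.Frequently.of_forall
    intro n
    exact hreal (u n) (hun n).1 (hun n).2.1
  have ht₀U : (t₀:ℂ) ∈ U := by
    rw [hU]
    exact ⟨cm_real_mem_ball ht₀0 (by linarith), cm_real_mem_ball ht₀0 (by linarith)⟩
  have hzU : z ∈ U := by
    rw [hU]
    constructor
    · rw [Metric.mem_ball, dist_eq_norm]; exact hza
    · rw [Metric.mem_ball, dist_eq_norm]; exact hzb
  exact AnalyticOnNhd.eqOn_of_preconnected_of_frequently_eq hAa hAb hApre ht₀U hfreq hzU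

lemma cm_A_pos {z : ℂ} (hz : 0 < z.re) : 0 < Complex.normSq z / z.re := by
  apply div_pos _ hz
  apply Complex.normSq_pos.2
  intro h
  rw [h] at hz
  simp at hz

lemma cm_mem_own {z : ℂ} (hz : 0 < z.re) :
    ‖z - ((Complex.normSq z / z.re : ℝ) : ℂ)‖ < Complex.normSq z / z.re := by
  obtain ⟨A, hA⟩ : ∃ A : ℝ, A = Complex.normSq z / z.re := ⟨_, rfl⟩
  rw [← hA]
  have hA0 : 0 < A := hA ▸ cm_A_pos hz
  have hAre : A * z.re = Complex.normSq z := by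
    rw [hA]; field_simp
  have hnsq : Complex.normSq z = z.re * z.re + z.im * z.im := Complex.normSq_apply z
  apply lt_of_pow_lt_pow_left₀ 2 hA0.le
  have hsq : ‖z - (A:ℂ)‖ ^ 2 = (z.re - A)^2 + z.im^2 := by
    rw [Complex.sq_norm, Complex.normSq_apply]
    simp [Complex.sub_re, Complex.sub_im, Complex.ofReal_re, Complex.ofReal_im]
    ring
  rw [hsq]
  nlinarith [hz, hAre, hnsq]

theorem completely_monotone_analytic_extension
    (g : ℝ → ℝ)
    (hg_smooth : ContDiffOn ℝ (⊤ : ℕ∞) g (Set.Ioi 0))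
    (hg_cm : ∀ (k : ℕ) (x : ℝ), 0 < x →
      0 ≤ (-1) ^ k * iteratedDerivWithin k g (Set.Ioi 0) x) :
    ∃ G : ℂ → ℂ, AnalyticOnNhd ℂ G {z : ℂ | 0 < z.re} ∧
      ∀ x : ℝ, 0 < x → G x = g x := by
  have hcm : ∀ (k : ℕ) (x : ℝ), 0 < x → 0 ≤ (-1) ^ k * cmD g k x := hg_cm
  refine ⟨fun z => (cmP g (Complex.normSq z / z.re)).sum
    (z - ((Complex.normSq z / z.re : ℝ) : ℂ)), ?_, ?_⟩
  · intro z₀ hz₀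
    simp only [Set.mem_setOf_eq] at hz₀
    obtain ⟨a₀, ha₀def⟩ : ∃ a₀ : ℝ, a₀ = Complex.normSq z₀ / z₀.re := ⟨_, rfl⟩
    have ha₀ : 0 < a₀ := ha₀def ▸ cm_A_pos hz₀
    have hmem₀ : ‖z₀ - (a₀:ℂ)‖ < a₀ := by rw [ha₀def]; exact cm_mem_own hz₀
    apply (cmT_analyticAt hg_smooth hcm ha₀ hmem₀).congr
    -- eventually equal
    have h1 : ∀ᶠ z in nhds z₀, 0 < z.re := by
      have : IsOpen {z : ℂ | 0 < z.re} := isOpen_lt continuous_const Complex.continuous_re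
      exact eventually_of_mem (this.mem_nhds hz₀) (fun z hz => hz)
    have hAcont : ContinuousAt (fun z : ℂ => Complex.normSq z / z.re) z₀ :=
      ContinuousAt.div (Complex.continuous_normSq.continuousAt)
        (Complex.continuous_re.continuousAt) (ne_of_gt hz₀)
    have h2 : ∀ᶠ z in nhds z₀,
        Complex.normSq z / z.re ∈ Set.Ioo (a₀ / 2) (2 * a₀) := by
      apply hAcont
      apply isOpen_Ioo.mem_nhds
      show Complex.normSq z₀ / z₀.re ∈ Set.Ioo (a₀ / 2) (2 * a₀)
      rw [← ha₀def]
      exact ⟨by linarith, by linarith⟩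
    have h3 : ∀ᶠ z in nhds z₀, ‖z - (a₀:ℂ)‖ < a₀ := by
      have hcont : Continuous (fun z : ℂ => ‖z - (a₀:ℂ)‖) :=
        (continuous_id.sub continuous_const).norm
      have : IsOpen {z : ℂ | ‖z - (a₀:ℂ)‖ < a₀} := isOpen_lt hcont continuous_const
      exact eventually_of_mem (this.mem_nhds hmem₀) (fun z hz => hz)
    filter_upwards [h1, h2, h3] with z hz1 hz2 hz3
    exact cm_consistent hg_smooth hcm ha₀ (cm_A_pos hz1) hz2.1 hz2.2 hz3 (cm_mem_own hz1)
  · intro x hx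
    have hA : Complex.normSq (x:ℂ) / (x:ℂ).re = x := by
      rw [Complex.normSq_ofReal, Complex.ofReal_re]
      field_simp
    simp only [hA]
    rw [sub_self]
    rw [FormalMultilinearSeries.sum]
    rw [tsum_eq_single 0]
    · rw [cmP_apply]
      simp [cmD, iteratedDerivWithin_zero]
    · intro k hk
      rw [cmP_apply, zero_pow hk, mul_zero]
end
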